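/- For every n ≥ 4, the group Γ_n^4 is generated by the set Λ consisting of the elements (123k) with 4 ≤ k ≤ n, the elements (1i2k) with 3 ≤ i < k ≤ n, and the elements (1ijk) with 2 ≤ i < k < j ≤ n; hence Γ_n^4 is generated by N_n = C(n,3) − 1 elements. -/
import Mathlib


/-- Ordered quadruples of elements of `Fin n`, used to index the generators `(ijkl)`. -/
abbrev Quad (n : ℕ) : Type := Fin n × Fin n × Fin n × Fin n

/-- The underlying set `{i, j, k, l}` of a quadruple `(i, j, k, l)`. -/
def qFinset {n : ℕ} (q : Quad n) : Finset (Fin n) := {q.1, q.2.1, q.2.2.1, q.2.2.2}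

/-- The four entries of the quadruple are pairwise distinct. -/
def qDistinct {n : ℕ} (q : Quad n) : Prop := (qFinset q).card = 4

/-- The defining relators of the group `Γ_n^4` of Kim–Manturov:
generators indexed by quadruples of distinct elements (non-distinct quadruples are killed),
involutive relations (1), commutativity relations (2), pentagon relations (3) and dihedral
relations (4). -/
def gammaRels (n : ℕ) : Set (FreeGroup (Quad n)) :=
  {w | ∃ q : Quad n, ¬ qDistinct q ∧ w = FreeGroup.of q} ∪
  {w | ∃ q : Quad n, qDistinct q ∧ w = FreeGroup.of q * FreeGroup.of q} ∪
  {w | ∃ q r : Quad n, qDistinct q ∧ qDistinct r ∧ (qFinset q ∩ qFinset r).card ≤ 2 ∧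
      w = FreeGroup.of q * FreeGroup.of r * (FreeGroup.of q)⁻¹ * (FreeGroup.of r)⁻¹} ∪
  {w | ∃ i j k l m : Fin n, ({i, j, k, l, m} : Finset (Fin n)).card = 5 ∧
      w = FreeGroup.of (i, j, k, l) * FreeGroup.of (i, j, l, m) * FreeGroup.of (j, k, l, m) *
        FreeGroup.of (i, j, k, m) * FreeGroup.of (i, k, l, m)} ∪
  {w | ∃ i j k l : Fin n, qDistinct (i, j, k, l) ∧
      (w = FreeGroup.of (i, j, k, l) * (FreeGroup.of (j, k, l, i))⁻¹ ∨
       w = FreeGroup.of (i, j, k, l) * (FreeGroup.of (l, k, j, i))⁻¹)}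

/-- The group `Γ_n^4` of Kim–Manturov. -/
abbrev Gamma (n : ℕ) : Type := PresentedGroup (gammaRels n)

/-- The generator `(ijkl)` of `Γ_n^4`. -/
def gg {n : ℕ} (q : Quad n) : Gamma n := PresentedGroup.of q
/-- The generating set `Λ` of `Γ_n^4` (with 0-based indices, so the paper's index `1` is `0`,
`2` is `1`, etc.): the elements `(123k)` with `4 ≤ k ≤ n`, the elements `(1i2k)` with
`3 ≤ i < k ≤ n`, and the elements `(1ijk)` with `2 ≤ i < k < j ≤ n`. -/
def LambdaGamma (n : ℕ) : Set (Gamma n) :=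
  {x | ∃ a b c k : Fin n, (a : ℕ) = 0 ∧ (b : ℕ) = 1 ∧ (c : ℕ) = 2 ∧ 3 ≤ (k : ℕ) ∧
      x = gg (a, b, c, k)} ∪
  {x | ∃ a i b k : Fin n, (a : ℕ) = 0 ∧ (b : ℕ) = 1 ∧ 2 ≤ (i : ℕ) ∧ i < k ∧
      x = gg (a, i, b, k)} ∪
  {x | ∃ a i j k : Fin n, (a : ℕ) = 0 ∧ 1 ≤ (i : ℕ) ∧ i < k ∧ k < j ∧
      x = gg (a, i, j, k)}

section Basic
variable {n : ℕ}

lemma card_le_three (i k l : Fin n) : ({i, k, l} : Finset (Fin n)).card ≤ 3 := by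
  refine le_trans (Finset.card_insert_le _ _) ?_
  refine le_trans (Nat.add_le_add_right (Finset.card_insert_le _ _) 1) ?_
  simp

lemma qD_of_ne {i j k l : Fin n} (h1 : i ≠ j) (h2 : i ≠ k) (h3 : i ≠ l)
    (h4 : j ≠ k) (h5 : j ≠ l) (h6 : k ≠ l) : qDistinct (i, j, k, l) := by
  unfold qDistinct qFinset
  rw [Finset.card_insert_of_notMem (by simp [h1, h2, h3]),
    Finset.card_insert_of_notMem (by simp [h4, h5]),
    Finset.card_insert_of_notMem (by simp [h6]), Finset.card_singleton]

lemma ne_of_qD {i j k l : Fin n} (h : qDistinct (i, j, k, l)) :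
    i ≠ j ∧ i ≠ k ∧ i ≠ l ∧ j ≠ k ∧ j ≠ l ∧ k ≠ l := by
  have h' : ({i, j, k, l} : Finset (Fin n)).card = 4 := h
  clear h
  refine ⟨?_, ?_, ?_, ?_, ?_, ?_⟩ <;> rintro rfl
  · have hs : ({i, i, k, l} : Finset (Fin n)) ⊆ {i, k, l} := by
      intro x hx; simp at hx ⊢; tauto
    have := Finset.card_le_card hs
    have := card_le_three i k l
    omega
  · have hs : ({i, j, i, l} : Finset (Fin n)) ⊆ {i, j, l} := by
      intro x hx; simp at hx ⊢; tauto
    have := Finset.card_le_card hs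
    have := card_le_three i j l
    omega
  · have hs : ({i, j, k, i} : Finset (Fin n)) ⊆ {i, j, k} := by
      intro x hx; simp at hx ⊢; tauto
    have := Finset.card_le_card hs
    have := card_le_three i j k
    omega
  · have hs : ({i, j, j, l} : Finset (Fin n)) ⊆ {i, j, l} := by
      intro x hx; simp at hx ⊢; tauto
    have := Finset.card_le_card hs
    have := card_le_three i j l
    omega
  · have hs : ({i, j, k, j} : Finset (Fin n)) ⊆ {i, j, k} := by
      intro x hx; simp at hx ⊢; tauto
    have := Finset.card_le_card hs
    have := card_le_three i j k
    omega
  · have hs : ({i, j, k, k} : Finset (Fin n)) ⊆ {i, j, k} := by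
      intro x hx; simp at hx ⊢; tauto
    have := Finset.card_le_card hs
    have := card_le_three i j k
    omega

lemma card5_of_ne {i j k l m : Fin n} (h1 : i ≠ j) (h2 : i ≠ k) (h3 : i ≠ l) (h4 : i ≠ m)
    (h5 : j ≠ k) (h6 : j ≠ l) (h7 : j ≠ m) (h8 : k ≠ l) (h9 : k ≠ m) (h10 : l ≠ m) :
    ({i, j, k, l, m} : Finset (Fin n)).card = 5 := by
  rw [Finset.card_insert_of_notMem (by simp [h1, h2, h3, h4]),
    Finset.card_insert_of_notMem (by simp [h5, h6, h7]),
    Finset.card_insert_of_notMem (by simp [h8, h9]),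
    Finset.card_insert_of_notMem (by simp [h10]), Finset.card_singleton]

lemma rel_one {w : FreeGroup (Quad n)} (hw : w ∈ gammaRels n) :
    (PresentedGroup.mk (gammaRels n) w : Gamma n) = 1 := by
  exact (QuotientGroup.eq_one_iff w).2 (Subgroup.subset_normalClosure hw)

lemma gg_eq_mk (q : Quad n) : gg q = PresentedGroup.mk (gammaRels n) (FreeGroup.of q) := rfl

lemma gg_one {q : Quad n} (h : ¬ qDistinct q) : gg q = 1 := by
  rw [gg_eq_mk]
  exact rel_one (Or.inl (Or.inl (Or.inl (Or.inl ⟨q, h, rfl⟩))))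

lemma gg_sq {q : Quad n} (h : qDistinct q) : gg q * gg q = 1 := by
  rw [gg_eq_mk, ← map_mul]
  exact rel_one (Or.inl (Or.inl (Or.inl (Or.inr ⟨q, h, rfl⟩))))

lemma gg_cyc {i j k l : Fin n} (h : qDistinct (i, j, k, l)) :
    gg (i, j, k, l) = gg (j, k, l, i) := by
  have := rel_one (n := n) (Or.inr ⟨i, j, k, l, h, Or.inl rfl⟩)
  rw [map_mul, map_inv] at this
  rw [gg_eq_mk, gg_eq_mk]
  exact mul_inv_eq_one.mp (by simpa [zpow_neg_one] using this)

lemma gg_rev {i j k l : Fin n} (h : qDistinct (i, j, k, l)) :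
    gg (i, j, k, l) = gg (l, k, j, i) := by
  have := rel_one (n := n) (Or.inr ⟨i, j, k, l, h, Or.inr rfl⟩)
  rw [map_mul, map_inv] at this
  rw [gg_eq_mk, gg_eq_mk]
  exact mul_inv_eq_one.mp (by simpa [zpow_neg_one] using this)

lemma gg_pent {i j k l m : Fin n} (h : ({i, j, k, l, m} : Finset (Fin n)).card = 5) :
    gg (i, j, k, l) * gg (i, j, l, m) * gg (j, k, l, m) * gg (i, j, k, m) * gg (i, k, l, m)
      = 1 := by
  have := rel_one (n := n) (Or.inl (Or.inr ⟨i, j, k, l, m, h, rfl⟩))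
  rw [map_mul, map_mul, map_mul, map_mul] at this
  simpa only [← gg_eq_mk] using this

end Basic

section Derived
variable {n : ℕ}

lemma qDv {a b c d : Fin n} (h1 : (a:ℕ) ≠ b) (h2 : (a:ℕ) ≠ c) (h3 : (a:ℕ) ≠ d)
    (h4 : (b:ℕ) ≠ c) (h5 : (b:ℕ) ≠ d) (h6 : (c:ℕ) ≠ d) : qDistinct (a, b, c, d) :=
  qD_of_ne (Fin.ne_of_val_ne h1) (Fin.ne_of_val_ne h2) (Fin.ne_of_val_ne h3)
    (Fin.ne_of_val_ne h4) (Fin.ne_of_val_ne h5) (Fin.ne_of_val_ne h6)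

lemma card5v {a b c d e : Fin n} (h1 : (a:ℕ) ≠ b) (h2 : (a:ℕ) ≠ c) (h3 : (a:ℕ) ≠ d)
    (h4 : (a:ℕ) ≠ e) (h5 : (b:ℕ) ≠ c) (h6 : (b:ℕ) ≠ d) (h7 : (b:ℕ) ≠ e)
    (h8 : (c:ℕ) ≠ d) (h9 : (c:ℕ) ≠ e) (h10 : (d:ℕ) ≠ e) :
    ({a, b, c, d, e} : Finset (Fin n)).card = 5 :=
  card5_of_ne (Fin.ne_of_val_ne h1) (Fin.ne_of_val_ne h2) (Fin.ne_of_val_ne h3)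
    (Fin.ne_of_val_ne h4) (Fin.ne_of_val_ne h5) (Fin.ne_of_val_ne h6)
    (Fin.ne_of_val_ne h7) (Fin.ne_of_val_ne h8) (Fin.ne_of_val_ne h9)
    (Fin.ne_of_val_ne h10)

lemma gg_rot {i j k l : Fin n} (h : qDistinct (i, j, k, l)) :
    gg (i, j, k, l) = gg (l, i, j, k) := by
  obtain ⟨h1, h2, h3, h4, h5, h6⟩ := ne_of_qD h
  rw [gg_cyc h, gg_cyc (qD_of_ne h4 h5 h1.symm h6 h2.symm h3.symm),
    gg_cyc (qD_of_ne h6 h2.symm h4.symm h3.symm h5.symm h1)]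

lemma gg_swap24 {i j k l : Fin n} (h : qDistinct (i, j, k, l)) :
    gg (i, j, k, l) = gg (i, l, k, j) := by
  obtain ⟨h1, h2, h3, h4, h5, h6⟩ := ne_of_qD h
  rw [gg_rev h, gg_rot (qD_of_ne h6.symm h5.symm h3.symm h4.symm h2.symm h1.symm)]

lemma pent_mem {H : Subgroup (Gamma n)} {i j k l m : Fin n}
    (h : ({i, j, k, l, m} : Finset (Fin n)).card = 5)
    (h2 : gg (i, j, l, m) ∈ H) (h3 : gg (j, k, l, m) ∈ H)
    (h4 : gg (i, j, k, m) ∈ H) (h5 : gg (i, k, l, m) ∈ H) :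
    gg (i, j, k, l) ∈ H := by
  have hp := gg_pent h
  have heq : gg (i, j, k, l)
      = (gg (i, j, l, m) * gg (j, k, l, m) * gg (i, j, k, m) * gg (i, k, l, m))⁻¹ := by
    rw [eq_inv_iff_mul_eq_one]
    simpa [mul_assoc] using hp
  rw [heq]
  exact inv_mem (mul_mem (mul_mem (mul_mem h2 h3) h4) h5)

def Hsub (n : ℕ) : Subgroup (Gamma n) := Subgroup.closure (LambdaGamma n)

lemma hL1 {z i j k : Fin n} (hz : (z:ℕ) = 0) (hi : 1 ≤ (i:ℕ)) (hik : (i:ℕ) < k)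
    (hkj : (k:ℕ) < j) : gg (z, i, j, k) ∈ Hsub n := by
  apply Subgroup.subset_closure
  exact Or.inr ⟨z, i, j, k, hz, hi, by rwa [Fin.lt_def], by rwa [Fin.lt_def], rfl⟩

lemma hL2 {z i o k : Fin n} (hz : (z:ℕ) = 0) (ho : (o:ℕ) = 1) (hi : 2 ≤ (i:ℕ))
    (hik : (i:ℕ) < k) : gg (z, i, o, k) ∈ Hsub n := by
  apply Subgroup.subset_closure
  exact Or.inl (Or.inr ⟨z, i, o, k, hz, ho, hi, by rwa [Fin.lt_def], rfl⟩)

lemma hL3 {z o t k : Fin n} (hz : (z:ℕ) = 0) (ho : (o:ℕ) = 1) (ht : (t:ℕ) = 2)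
    (hk : 3 ≤ (k:ℕ)) : gg (z, o, t, k) ∈ Hsub n := by
  apply Subgroup.subset_closure
  exact Or.inl (Or.inl ⟨z, o, t, k, hz, ho, ht, hk, rfl⟩)

end Derived

section Main
variable {n : ℕ}

lemma fvne {a b : Fin n} (h : a ≠ b) : (a:ℕ) ≠ b := fun hh => h (Fin.val_injective hh)

lemma Zcore {z w q s : Fin n} (hz : (z:ℕ) = 0) (hw : 1 ≤ (w:ℕ)) (hq : 2 ≤ (q:ℕ))
    (hwq : (w:ℕ) ≠ q) (hws : (w:ℕ) < s) (hqs : (q:ℕ) < s)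
    (IH : ∀ a b c d : Fin n, qDistinct (a, b, c, d) → (a:ℕ) < s → (b:ℕ) < s →
      (c:ℕ) < s → (d:ℕ) < s → gg (a, b, c, d) ∈ Hsub n) :
    gg (z, w, q, s) ∈ Hsub n := by
  have hsn := s.isLt
  by_cases hw1 : (w:ℕ) = 1
  · by_cases hq2 : (q:ℕ) = 2
    · exact hL3 hz hw1 hq2 (by omega)
    · -- q ≥ 3, s ≥ 4
      have hq3 : 3 ≤ (q:ℕ) := by omega
      set t2 : Fin n := ⟨2, by omega⟩ with ht2
      have ht2v : (t2:ℕ) = 2 := rfl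
      have hN : gg (w, q, s, t2) ∈ Hsub n := by
        have hmem : gg (w, t2, s, q) ∈ Hsub n := by
          refine pent_mem (m := z)
            (card5v (by omega) (by omega) (by omega) (by omega) (by omega)
              (by omega) (by omega) (by omega) (by omega) (by omega)) ?_ ?_ ?_ ?_
          · exact IH w t2 q z
              (qDv (by omega) (by omega) (by omega) (by omega) (by omega) (by omega))
              (by omega) (by omega) (by omega) (by omega)
          · rw [gg_rot (qDv (by omega) (by omega) (by omega) (by omega) (by omega) (by omega))]
            exact hL1 hz (by omega) (by omega) (by omega)
          · rw [gg_rot (qDv (by omega) (by omega) (by omega) (by omega) (by omega) (by omega))]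
            exact hL3 hz hw1 ht2v (by omega)
          · rw [gg_rot (qDv (by omega) (by omega) (by omega) (by omega) (by omega) (by omega))]
            exact hL1 hz (by omega) (by omega) (by omega)
        rw [gg_swap24 (qDv (by omega) (by omega) (by omega) (by omega) (by omega) (by omega))]
        exact hmem
      refine pent_mem (m := t2)
        (card5v (by omega) (by omega) (by omega) (by omega) (by omega)
          (by omega) (by omega) (by omega) (by omega) (by omega)) ?_ ?_ ?_ ?_
      · exact hL1 hz (by omega) (by omega) (by omega)
      · exact hN
      · exact IH z w q t2
          (qDv (by omega) (by omega) (by omega) (by omega) (by omega) (by omega))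
          (by omega) (by omega) (by omega) (by omega)
      · rw [gg_swap24 (qDv (by omega) (by omega) (by omega) (by omega) (by omega) (by omega))]
        exact hL1 hz (by omega) (by omega) (by omega)
  · -- w ≥ 2
    have hw2 : 2 ≤ (w:ℕ) := by omega
    set t1 : Fin n := ⟨1, by omega⟩ with ht1
    have ht1v : (t1:ℕ) = 1 := rfl
    have hN : gg (w, q, s, t1) ∈ Hsub n := by
      have hmem : gg (w, t1, s, q) ∈ Hsub n := by
        refine pent_mem (m := z)
          (card5v (by omega) (by omega) (by omega) (by omega) (by omega)
            (by omega) (by omega) (by omega) (by omega) (by omega)) ?_ ?_ ?_ ?_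
        · exact IH w t1 q z
            (qDv (by omega) (by omega) (by omega) (by omega) (by omega) (by omega))
            (by omega) (by omega) (by omega) (by omega)
        · rw [gg_rot (qDv (by omega) (by omega) (by omega) (by omega) (by omega) (by omega))]
          exact hL1 hz (by omega) (by omega) (by omega)
        · rw [gg_rot (qDv (by omega) (by omega) (by omega) (by omega) (by omega) (by omega))]
          exact hL2 hz ht1v (by omega) (by omega)
        · rw [gg_rot (qDv (by omega) (by omega) (by omega) (by omega) (by omega) (by omega))]
          rcases Nat.lt_or_ge (w:ℕ) (q:ℕ) with hlt | hge
          · exact hL1 hz (by omega) (by omega) (by omega)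
          · rw [gg_swap24 (qDv (by omega) (by omega) (by omega) (by omega) (by omega) (by omega))]
            exact hL1 hz (by omega) (by omega) (by omega)
      rw [gg_swap24 (qDv (by omega) (by omega) (by omega) (by omega) (by omega) (by omega))]
      exact hmem
    refine pent_mem (m := t1)
      (card5v (by omega) (by omega) (by omega) (by omega) (by omega)
        (by omega) (by omega) (by omega) (by omega) (by omega)) ?_ ?_ ?_ ?_
    · rw [gg_swap24 (qDv (by omega) (by omega) (by omega) (by omega) (by omega) (by omega))]
      exact hL1 hz (by omega) (by omega) (by omega)
    · exact hN
    · exact IH z w q t1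
        (qDv (by omega) (by omega) (by omega) (by omega) (by omega) (by omega))
        (by omega) (by omega) (by omega) (by omega)
    · rw [gg_swap24 (qDv (by omega) (by omega) (by omega) (by omega) (by omega) (by omega))]
      exact hL1 hz (by omega) (by omega) (by omega)

lemma Zlem {z p q r : Fin n} (hz : (z:ℕ) = 0) (hp : 1 ≤ (p:ℕ)) (hq : 1 ≤ (q:ℕ))
    (hr : 1 ≤ (r:ℕ)) (hpq : (p:ℕ) ≠ q) (hpr : (p:ℕ) ≠ r) (hqr : (q:ℕ) ≠ r)
    (IH : ∀ a b c d : Fin n, qDistinct (a, b, c, d) →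
      (a:ℕ) < max (max (p:ℕ) (q:ℕ)) (r:ℕ) → (b:ℕ) < max (max (p:ℕ) (q:ℕ)) (r:ℕ) →
      (c:ℕ) < max (max (p:ℕ) (q:ℕ)) (r:ℕ) → (d:ℕ) < max (max (p:ℕ) (q:ℕ)) (r:ℕ) →
      gg (a, b, c, d) ∈ Hsub n) :
    gg (z, p, q, r) ∈ Hsub n := by
  rcases Nat.lt_or_ge (p:ℕ) (r:ℕ) with hsort | hsort
  · -- p < r
    by_cases hq1 : (q:ℕ) = 1
    · exact hL2 hz hq1 (by omega) (by omega)
    · by_cases hqmax : (r:ℕ) < (q:ℕ)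
      · exact hL1 hz hp (by omega) (by omega)
      · exact Zcore hz hp (by omega) hpq hsort (by omega)
          (fun a b c d hD h1 h2 h3 h4 =>
            IH a b c d hD (by omega) (by omega) (by omega) (by omega))
  · -- r < p
    rw [gg_swap24 (qDv (by omega) (by omega) (by omega) (by omega) (by omega) (by omega))]
    by_cases hq1 : (q:ℕ) = 1
    · exact hL2 hz hq1 (by omega) (by omega)
    · by_cases hqmax : (p:ℕ) < (q:ℕ)
      · exact hL1 hz hr (by omega) (by omega)
      · exact Zcore hz hr (by omega) (by omega) (by omega) (by omega)
          (fun a b c d hD h1 h2 h3 h4 =>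
            IH a b c d hD (by omega) (by omega) (by omega) (by omega))

lemma mainP : ∀ m : ℕ, ∀ a b c d : Fin n, qDistinct (a, b, c, d) → (a:ℕ) ≤ m →
    (b:ℕ) ≤ m → (c:ℕ) ≤ m → (d:ℕ) ≤ m → gg (a, b, c, d) ∈ Hsub n := by
  intro m
  induction m using Nat.strong_induction_on with
  | _ m IH =>
  intro a b c d hD ha hb hc hd
  obtain ⟨n1, n2, n3, n4, n5, n6⟩ := ne_of_qD hD
  have v1 := fvne n1; have v2 := fvne n2; have v3 := fvne n3
  have v4 := fvne n4; have v5 := fvne n5; have v6 := fvne n6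
  have hm3 : 3 ≤ m := by omega
  by_cases hlt : (a:ℕ) < m ∧ (b:ℕ) < m ∧ (c:ℕ) < m ∧ (d:ℕ) < m
  · exact IH (m-1) (by omega) a b c d hD (by omega) (by omega) (by omega) (by omega)
  · by_cases hza : (a:ℕ) = 0
    · exact Zlem hza (by omega) (by omega) (by omega) v4 v5 v6
        (fun x y u v hq h1 h2 h3 h4 =>
          IH (m-1) (by omega) x y u v hq (by omega) (by omega) (by omega) (by omega))
    by_cases hzb : (b:ℕ) = 0
    · rw [gg_cyc hD]
      exact Zlem hzb (by omega) (by omega) (by omega) v6 (by omega) (by omega)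
        (fun x y u v hq h1 h2 h3 h4 =>
          IH (m-1) (by omega) x y u v hq (by omega) (by omega) (by omega) (by omega))
    by_cases hzc : (c:ℕ) = 0
    · rw [gg_cyc hD, gg_cyc (qDv v4 v5 (by omega) v6 (by omega) (by omega))]
      exact Zlem hzc (by omega) (by omega) (by omega) (by omega) (by omega) (by omega)
        (fun x y u v hq h1 h2 h3 h4 =>
          IH (m-1) (by omega) x y u v hq (by omega) (by omega) (by omega) (by omega))
    by_cases hzd : (d:ℕ) = 0
    · rw [gg_rot hD]
      exact Zlem hzd (by omega) (by omega) (by omega) v1 v2 v4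
        (fun x y u v hq h1 h2 h3 h4 =>
          IH (m-1) (by omega) x y u v hq (by omega) (by omega) (by omega) (by omega))
    · -- no zero coordinate: pentagon with 0
      have h0n : 0 < n := lt_of_le_of_lt (Nat.zero_le _) a.isLt
      set z0 : Fin n := ⟨0, h0n⟩ with hz0
      have hz0v : (z0:ℕ) = 0 := rfl
      refine pent_mem (m := z0)
        (card5v v1 v2 v3 (by omega) v4 v5 (by omega) v6 (by omega) (by omega)) ?_ ?_ ?_ ?_
      · rw [gg_rot (qDv v1 v3 (by omega) v5 (by omega) (by omega))]
        exact Zlem hz0v (by omega) (by omega) (by omega) v1 v3 v5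
          (fun x y u v hq h1 h2 h3 h4 =>
            IH (m-1) (by omega) x y u v hq (by omega) (by omega) (by omega) (by omega))
      · rw [gg_rot (qDv v4 v5 (by omega) v6 (by omega) (by omega))]
        exact Zlem hz0v (by omega) (by omega) (by omega) v4 v5 v6
          (fun x y u v hq h1 h2 h3 h4 =>
            IH (m-1) (by omega) x y u v hq (by omega) (by omega) (by omega) (by omega))
      · rw [gg_rot (qDv v1 v2 (by omega) v4 (by omega) (by omega))]
        exact Zlem hz0v (by omega) (by omega) (by omega) v1 v2 v4
          (fun x y u v hq h1 h2 h3 h4 =>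
            IH (m-1) (by omega) x y u v hq (by omega) (by omega) (by omega) (by omega))
      · rw [gg_rot (qDv v2 v3 (by omega) v6 (by omega) (by omega))]
        exact Zlem hz0v (by omega) (by omega) (by omega) v2 v3 v6
          (fun x y u v hq h1 h2 h3 h4 =>
            IH (m-1) (by omega) x y u v hq (by omega) (by omega) (by omega) (by omega))

lemma closure_lambda_top : Subgroup.closure (LambdaGamma n) = ⊤ := by
  rw [eq_top_iff]
  intro x _
  refine PresentedGroup.generated_by (gammaRels n) (Hsub n) ?_ x
  intro q
  by_cases h : qDistinct q
  · obtain ⟨a, b, c, d⟩ := q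
    exact mainP (max (max (a:ℕ) (b:ℕ)) (max (c:ℕ) (d:ℕ))) a b c d h
      (by omega) (by omega) (by omega) (by omega)
  · show gg q ∈ Hsub n
    rw [gg_one h]
    exact one_mem _

end Main

section Hom
variable {n : ℕ}

open scoped Classical in
noncomputable def phifun (q : Quad n) : Sym2 (Fin n) → ZMod 2 := fun P =>
  if qDistinct q ∧ (P = s(q.1, q.2.2.1) ∨ P = s(q.2.1, q.2.2.2)) then 1 else 0

lemma zmod2_add_self : ∀ x : ZMod 2, x + x = 0 := by decide

lemma card_le_four (i j k l : Fin n) : ({i, j, k, l} : Finset (Fin n)).card ≤ 4 := by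
  refine le_trans (Finset.card_insert_le _ _) ?_
  have := card_le_three j k l
  omega

lemma ne_of_card5 {i j k l m : Fin n} (h : ({i, j, k, l, m} : Finset (Fin n)).card = 5) :
    i ≠ j ∧ i ≠ k ∧ i ≠ l ∧ i ≠ m ∧ j ≠ k ∧ j ≠ l ∧ j ≠ m ∧ k ≠ l ∧ k ≠ m ∧ l ≠ m := by
  refine ⟨?_, ?_, ?_, ?_, ?_, ?_, ?_, ?_, ?_, ?_⟩ <;> rintro rfl
  · have hs : ({i, i, k, l, m} : Finset (Fin n)) ⊆ {i, k, l, m} := by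
      intro x hx; simp at hx ⊢; tauto
    have := Finset.card_le_card hs; have := card_le_four i k l m; omega
  · have hs : ({i, j, i, l, m} : Finset (Fin n)) ⊆ {i, j, l, m} := by
      intro x hx; simp at hx ⊢; tauto
    have := Finset.card_le_card hs; have := card_le_four i j l m; omega
  · have hs : ({i, j, k, i, m} : Finset (Fin n)) ⊆ {i, j, k, m} := by
      intro x hx; simp at hx ⊢; tauto
    have := Finset.card_le_card hs; have := card_le_four i j k m; omega
  · have hs : ({i, j, k, l, i} : Finset (Fin n)) ⊆ {i, j, k, l} := by
      intro x hx; simp at hx ⊢; tauto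
    have := Finset.card_le_card hs; have := card_le_four i j k l; omega
  · have hs : ({i, j, j, l, m} : Finset (Fin n)) ⊆ {i, j, l, m} := by
      intro x hx; simp at hx ⊢; tauto
    have := Finset.card_le_card hs; have := card_le_four i j l m; omega
  · have hs : ({i, j, k, j, m} : Finset (Fin n)) ⊆ {i, j, k, m} := by
      intro x hx; simp at hx ⊢; tauto
    have := Finset.card_le_card hs; have := card_le_four i j k m; omega
  · have hs : ({i, j, k, l, j} : Finset (Fin n)) ⊆ {i, j, k, l} := by
      intro x hx; simp at hx ⊢; tauto
    have := Finset.card_le_card hs; have := card_le_four i j k l; omega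
  · have hs : ({i, j, k, k, m} : Finset (Fin n)) ⊆ {i, j, k, m} := by
      intro x hx; simp at hx ⊢; tauto
    have := Finset.card_le_card hs; have := card_le_four i j k m; omega
  · have hs : ({i, j, k, l, k} : Finset (Fin n)) ⊆ {i, j, k, l} := by
      intro x hx; simp at hx ⊢; tauto
    have := Finset.card_le_card hs; have := card_le_four i j k l; omega
  · have hs : ({i, j, k, l, l} : Finset (Fin n)) ⊆ {i, j, k, l} := by
      intro x hx; simp at hx ⊢; tauto
    have := Finset.card_le_card hs; have := card_le_four i j k l; omega

lemma ite_or_split {P A B : Sym2 (Fin n)} (hAB : A ≠ B) :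
    (if (P = A ∨ P = B) then (1 : ZMod 2) else 0)
      = (if P = A then (1 : ZMod 2) else 0) + (if P = B then (1 : ZMod 2) else 0) := by
  by_cases hA : P = A <;> by_cases hB : P = B <;> simp_all

lemma phifun_congr {q q' : Quad n} (hd : qDistinct q ↔ qDistinct q')
    (hpair : ∀ P : Sym2 (Fin n),
      (P = s(q.1, q.2.2.1) ∨ P = s(q.2.1, q.2.2.2)) ↔
      (P = s(q'.1, q'.2.2.1) ∨ P = s(q'.2.1, q'.2.2.2))) : phifun q = phifun q' := by
  funext P
  unfold phifun
  by_cases h : qDistinct q ∧ (P = s(q.1, q.2.2.1) ∨ P = s(q.2.1, q.2.2.2))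
  · rw [if_pos h, if_pos ⟨hd.1 h.1, (hpair P).1 h.2⟩]
  · rw [if_neg h, if_neg (fun hc => h ⟨hd.2 hc.1, (hpair P).2 hc.2⟩)]

lemma relcheck : ∀ r ∈ gammaRels n,
    FreeGroup.lift (fun q : Quad n => Multiplicative.ofAdd (phifun q)) r = 1 := by
  intro r hr
  rcases hr with ((((⟨q, hq, rfl⟩ | ⟨q, hq, rfl⟩) | ⟨q, q', _, _, _, rfl⟩) |
    ⟨i, j, k, l, m, h5, rfl⟩) | ⟨i, j, k, l, hD, hw⟩)
  · rw [FreeGroup.lift_apply_of, ← ofAdd_zero]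
    congr 1
    funext P
    exact if_neg (fun h => hq h.1)
  · rw [map_mul, FreeGroup.lift_apply_of, ← ofAdd_add, ← ofAdd_zero]
    congr 1
    funext P
    exact zmod2_add_self _
  · rw [map_mul, map_mul, map_mul, map_inv, map_inv]
    set x := FreeGroup.lift (fun q : Quad n => Multiplicative.ofAdd (phifun q)) (FreeGroup.of q)
    set y := FreeGroup.lift (fun q : Quad n => Multiplicative.ofAdd (phifun q)) (FreeGroup.of q')
    rw [mul_comm x y]
    group
  · obtain ⟨d1, d2, d3, d4, d5, d6, d7, d8, d9, d10⟩ := ne_of_card5 h5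
    have hD1 : qDistinct (i, j, k, l) := qD_of_ne d1 d2 d3 d5 d6 d8
    have hD2 : qDistinct (i, j, l, m) := qD_of_ne d1 d3 d4 d6 d7 d10
    have hD3 : qDistinct (j, k, l, m) := qD_of_ne d5 d6 d7 d8 d9 d10
    have hD4 : qDistinct (i, j, k, m) := qD_of_ne d1 d2 d4 d5 d7 d9
    have hD5 : qDistinct (i, k, l, m) := qD_of_ne d2 d3 d4 d8 d9 d10
    rw [map_mul, map_mul, map_mul, map_mul, FreeGroup.lift_apply_of, FreeGroup.lift_apply_of,
      FreeGroup.lift_apply_of, FreeGroup.lift_apply_of, FreeGroup.lift_apply_of,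
      ← ofAdd_add, ← ofAdd_add, ← ofAdd_add, ← ofAdd_add, ← ofAdd_zero]
    congr 1
    funext P
    show phifun (i, j, k, l) P + phifun (i, j, l, m) P + phifun (j, k, l, m) P
        + phifun (i, j, k, m) P + phifun (i, k, l, m) P = 0
    have eA : s(i, k) ≠ s(j, l) := by simp only [ne_eq, Sym2.eq_iff]; tauto
    have eB : s(i, l) ≠ s(j, m) := by simp only [ne_eq, Sym2.eq_iff]; tauto
    have eC : s(j, l) ≠ s(k, m) := by simp only [ne_eq, Sym2.eq_iff]; tauto
    have eD : s(i, k) ≠ s(j, m) := by simp only [ne_eq, Sym2.eq_iff]; tauto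
    have eE : s(i, l) ≠ s(k, m) := by simp only [ne_eq, Sym2.eq_iff]; tauto
    unfold phifun
    simp only [hD1, hD2, hD3, hD4, hD5, true_and]
    rw [ite_or_split eA, ite_or_split eB, ite_or_split eC, ite_or_split eD, ite_or_split eE]
    ring_nf
    rw [show (2 : ZMod 2) = 0 from by decide]
    ring
  · obtain ⟨d1, d2, d3, d4, d5, d6⟩ := ne_of_qD hD
    rcases hw with rfl | rfl
    · have hD' : qDistinct (j, k, l, i) := qD_of_ne d4 d5 d1.symm d6 d2.symm d3.symm
      rw [map_mul, map_inv, FreeGroup.lift_apply_of, FreeGroup.lift_apply_of, mul_inv_eq_one]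
      congr 1
      refine phifun_congr (iff_of_true hD hD') ?_
      intro P
      show (P = s(i, k) ∨ P = s(j, l)) ↔ (P = s(j, l) ∨ P = s(k, i))
      rw [show s(k, i) = s(i, k) from Sym2.eq_swap]
      exact or_comm
    · have hD' : qDistinct (l, k, j, i) := qD_of_ne d6.symm d5.symm d3.symm d4.symm d2.symm d1.symm
      rw [map_mul, map_inv, FreeGroup.lift_apply_of, FreeGroup.lift_apply_of, mul_inv_eq_one]
      congr 1
      refine phifun_congr (iff_of_true hD hD') ?_
      intro P
      show (P = s(i, k) ∨ P = s(j, l)) ↔ (P = s(l, j) ∨ P = s(k, i))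
      rw [show s(k, i) = s(i, k) from Sym2.eq_swap, show s(l, j) = s(j, l) from Sym2.eq_swap]
      exact or_comm

noncomputable def Phi : Gamma n →* Multiplicative (Sym2 (Fin n) → ZMod 2) :=
  PresentedGroup.toGroup relcheck

lemma Phi_gg (q : Quad n) : Phi (gg q) = Multiplicative.ofAdd (phifun q) :=
  PresentedGroup.toGroup.of relcheck

end Hom

section Count
open scoped Classical
variable {n : ℕ}

def fam1 (hn : 4 ≤ n) : Finset (Quad n) :=
  (Finset.univ.filter fun k : Fin n => 3 ≤ (k:ℕ)).image
    fun k => (⟨0, by omega⟩, ⟨1, by omega⟩, ⟨2, by omega⟩, k)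

def fam2 (hn : 4 ≤ n) : Finset (Quad n) :=
  ((Finset.univ ×ˢ Finset.univ).filter
      fun p : Fin n × Fin n => 2 ≤ (p.1:ℕ) ∧ (p.1:ℕ) < p.2).image
    fun p => (⟨0, by omega⟩, p.1, ⟨1, by omega⟩, p.2)

def fam3 (hn : 4 ≤ n) : Finset (Quad n) :=
  ((Finset.univ ×ˢ Finset.univ ×ˢ Finset.univ).filter
      fun t : Fin n × Fin n × Fin n => 1 ≤ (t.1:ℕ) ∧ (t.1:ℕ) < t.2.2 ∧ (t.2.2:ℕ) < t.2.1).image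
    fun t => (⟨0, by omega⟩, t.1, t.2.1, t.2.2)

def famAll (hn : 4 ≤ n) : Finset (Quad n) := fam1 hn ∪ fam2 hn ∪ fam3 hn

lemma fam_struct {hn : 4 ≤ n} {q : Quad n} (h : q ∈ famAll hn) :
    (q.1:ℕ) = 0 ∧ 1 ≤ (q.2.1:ℕ) ∧ 1 ≤ (q.2.2.1:ℕ) ∧ (q.2.1:ℕ) < q.2.2.2 ∧
    (q.2.2.1:ℕ) ≠ q.2.1 ∧ (q.2.2.1:ℕ) ≠ q.2.2.2 := by
  simp only [famAll, fam1, fam2, fam3, Finset.mem_union, Finset.mem_image,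
    Finset.mem_filter, Finset.mem_univ, Finset.mem_product, true_and] at h
  rcases h with (⟨k, hk, rfl⟩ | ⟨p, ⟨hp1, hp2⟩, rfl⟩) | ⟨t, ⟨ht1, ht2, ht3⟩, rfl⟩ <;>
    · dsimp only
      refine ⟨rfl, by omega, by omega, by omega, by omega, by omega⟩

lemma fam_qD {hn : 4 ≤ n} {q : Quad n} (h : q ∈ famAll hn) : qDistinct q := by
  obtain ⟨a1, a2, a3, a4⟩ := q
  obtain ⟨h1, h2, h3, h4, h5, h6⟩ := fam_struct h
  dsimp only at h1 h2 h3 h4 h5 h6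
  exact qDv (by omega) (by omega) (by omega) (by omega) (by omega) (by omega)

lemma gg_injOn (hn : 4 ≤ n) : Set.InjOn gg ((famAll hn : Finset (Quad n)) : Set (Quad n)) := by
  intro q hq q' hq' heq
  have hDq := fam_qD (hn := hn) hq
  have hDq' := fam_qD (hn := hn) hq'
  obtain ⟨s1, s2, s3, s4, s5, s6⟩ := fam_struct (hn := hn) hq
  obtain ⟨t1, t2, t3, t4, t5, t6⟩ := fam_struct (hn := hn) hq'
  have hphi : phifun q = phifun q' := by
    have h := congrArg Phi heq
    rw [Phi_gg, Phi_gg] at h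
    exact Multiplicative.ofAdd.injective h
  have key : ∀ P : Sym2 (Fin n), (P = s(q.1, q.2.2.1) ∨ P = s(q.2.1, q.2.2.2)) →
      (P = s(q'.1, q'.2.2.1) ∨ P = s(q'.2.1, q'.2.2.2)) := by
    intro P hP
    have h1 : phifun q' P = 1 := by
      rw [← hphi]
      unfold phifun
      exact if_pos ⟨hDq, hP⟩
    unfold phifun at h1
    by_cases hcond : qDistinct q' ∧
        (P = s(q'.1, q'.2.2.1) ∨ P = s(q'.2.1, q'.2.2.2))
    · exact hcond.2
    · rw [if_neg hcond] at h1
      exact absurd h1 (by decide)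
  have hA := key _ (Or.inl rfl)
  have hB := key _ (Or.inr rfl)
  obtain ⟨a1, a2, a3, a4⟩ := q
  obtain ⟨b1, b2, b3, b4⟩ := q'
  dsimp only at s1 s2 s3 s4 s5 s6 t1 t2 t3 t4 t5 t6 hA hB
  rw [Sym2.eq_iff, Sym2.eq_iff] at hA hB
  have e13 : a1 = b1 ∧ a3 = b3 := by
    rcases hA with (⟨x, y⟩ | ⟨x, y⟩) | (⟨x, y⟩ | ⟨x, y⟩)
    · exact ⟨x, y⟩
    · have := congrArg Fin.val x; have := congrArg Fin.val y; omega
    · have := congrArg Fin.val x; have := congrArg Fin.val y; omega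
    · have := congrArg Fin.val x; have := congrArg Fin.val y; omega
  have e24 : a2 = b2 ∧ a4 = b4 := by
    rcases hB with (⟨x, y⟩ | ⟨x, y⟩) | (⟨x, y⟩ | ⟨x, y⟩)
    · have := congrArg Fin.val x; have := congrArg Fin.val y; omega
    · have := congrArg Fin.val x; have := congrArg Fin.val y; omega
    · exact ⟨x, y⟩
    · have := congrArg Fin.val x; have := congrArg Fin.val y; omega
  rw [e13.1, e13.2, e24.1, e24.2]

lemma lambda_eq (hn : 4 ≤ n) : LambdaGamma n = ↑((famAll hn).image gg) := by
  ext x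
  simp only [Finset.coe_image, Set.mem_image, Finset.mem_coe]
  constructor
  · rintro ((⟨a, b, c, k, ha, hb, hc, hk, rfl⟩ | ⟨a, i, b, k, ha, hb, hi, hik, rfl⟩) |
      ⟨a, i, j, k, ha, hi, hik, hkj, rfl⟩)
    · refine ⟨(a, b, c, k), ?_, rfl⟩
      refine Finset.mem_union_left _ (Finset.mem_union_left _ ?_)
      simp only [fam1, Finset.mem_image, Finset.mem_filter, Finset.mem_univ, true_and]
      exact ⟨k, hk, by
        refine Prod.ext_iff.mpr ⟨(Fin.ext ha.symm), Prod.ext_iff.mpr ⟨(Fin.ext hb.symm),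
          Prod.ext_iff.mpr ⟨(Fin.ext hc.symm), rfl⟩⟩⟩⟩
    · refine ⟨(a, i, b, k), ?_, rfl⟩
      refine Finset.mem_union_left _ (Finset.mem_union_right _ ?_)
      simp only [fam2, Finset.mem_image, Finset.mem_filter, Finset.mem_univ, Finset.mem_product,
        true_and]
      refine ⟨(i, k), ⟨hi, Fin.lt_def.mp hik⟩, ?_⟩
      exact Prod.ext_iff.mpr ⟨(Fin.ext ha.symm), Prod.ext_iff.mpr ⟨rfl,
        Prod.ext_iff.mpr ⟨(Fin.ext hb.symm), rfl⟩⟩⟩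
    · refine ⟨(a, i, j, k), ?_, rfl⟩
      refine Finset.mem_union_right _ ?_
      simp only [fam3, Finset.mem_image, Finset.mem_filter, Finset.mem_univ, Finset.mem_product,
        true_and]
      refine ⟨(i, j, k), ⟨hi, Fin.lt_def.mp hik, Fin.lt_def.mp hkj⟩, ?_⟩
      exact Prod.ext_iff.mpr ⟨(Fin.ext ha.symm), rfl⟩
  · rintro ⟨q, hq, rfl⟩
    simp only [famAll, fam1, fam2, fam3, Finset.mem_union, Finset.mem_image,
      Finset.mem_filter, Finset.mem_univ, Finset.mem_product, true_and] at hq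
    rcases hq with (⟨k, hk, rfl⟩ | ⟨p, ⟨hp1, hp2⟩, rfl⟩) | ⟨t, ⟨ht1, ht2, ht3⟩, rfl⟩
    · exact Or.inl (Or.inl ⟨_, _, _, k, rfl, rfl, rfl, hk, rfl⟩)
    · exact Or.inl (Or.inr ⟨_, p.1, _, p.2, rfl, rfl, hp1, Fin.lt_def.mpr hp2, rfl⟩)
    · exact Or.inr ⟨_, t.1, t.2.1, t.2.2, rfl, ht1, Fin.lt_def.mpr ht2,
        Fin.lt_def.mpr ht3, rfl⟩

lemma card_filter_ge (a : ℕ) :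
    ((Finset.univ : Finset (Fin n)).filter fun k : Fin n => a ≤ (k:ℕ)).card = n - a := by
  rw [← Nat.card_Ico a n]
  apply Finset.card_bij (fun (k : Fin n) _ => (k:ℕ))
  · intro x hx
    simp only [Finset.mem_filter, Finset.mem_univ, true_and] at hx
    exact Finset.mem_Ico.mpr ⟨hx, x.isLt⟩
  · intro x _ y _ h
    exact Fin.val_injective h
  · intro b hb
    obtain ⟨h1, h2⟩ := Finset.mem_Ico.mp hb
    exact ⟨⟨b, h2⟩, by simp [h1], rfl⟩

lemma card_fam1 (hn : 4 ≤ n) : (fam1 hn).card = n - 3 := by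
  rw [fam1, Finset.card_image_of_injective _
    (fun x y h => congrArg (fun t : Quad n => t.2.2.2) h), card_filter_ge]

lemma card_fam2 (hn : 4 ≤ n) : (fam2 hn).card = (n - 2).choose 2 := by
  rw [fam2, Finset.card_image_of_injective _ (fun x y h => Prod.ext_iff.mpr
    ⟨congrArg (fun t : Quad n => t.2.1) h, congrArg (fun t : Quad n => t.2.2.2) h⟩)]
  rw [show (n - 2).choose 2 = (((Finset.univ : Finset (Fin n)).filter
      fun i : Fin n => 2 ≤ (i:ℕ)).powersetCard 2).card by
    rw [Finset.card_powersetCard, card_filter_ge]]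
  apply Finset.card_bij (fun (p : Fin n × Fin n) _ => ({p.1, p.2} : Finset (Fin n)))
  · intro p hp
    simp only [Finset.mem_filter, Finset.mem_univ, Finset.mem_product, true_and] at hp
    rw [Finset.mem_powersetCard]
    constructor
    · intro x hx
      simp only [Finset.mem_insert, Finset.mem_singleton] at hx
      rcases hx with rfl | rfl <;> simp only [Finset.mem_filter, Finset.mem_univ, true_and] <;>
        omega
    · exact Finset.card_pair (by
        intro hc; have := congrArg Fin.val hc; omega)
  · intro p hp p' hp'
    simp only [Finset.mem_filter, Finset.mem_univ, Finset.mem_product, true_and] at hp hp'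
    intro h
    have m1 : p.1 = p'.1 ∨ p.1 = p'.2 := by
      have : p.1 ∈ ({p'.1, p'.2} : Finset (Fin n)) := h ▸ (by simp)
      simpa using this
    have m2 : p.2 = p'.1 ∨ p.2 = p'.2 := by
      have : p.2 ∈ ({p'.1, p'.2} : Finset (Fin n)) := h ▸ (by simp)
      simpa using this
    rcases m1 with e1 | e1 <;> rcases m2 with e2 | e2 <;>
      first
        | exact Prod.ext_iff.mpr ⟨e1, e2⟩
        | (exfalso; have v1 := congrArg Fin.val e1; have v2 := congrArg Fin.val e2; omega)
  · intro T hT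
    rw [Finset.mem_powersetCard] at hT
    obtain ⟨hsub, hcard⟩ := hT
    obtain ⟨x, y, hxy, rfl⟩ := Finset.card_eq_two.mp hcard
    have hx : 2 ≤ (x:ℕ) := by
      have := hsub (Finset.mem_insert_self x {y})
      simpa using this
    have hy : 2 ≤ (y:ℕ) := by
      have := hsub (Finset.mem_insert_of_mem (Finset.mem_singleton_self y))
      simpa using this
    have hxyv : (x:ℕ) ≠ y := fvne hxy
    rcases Nat.lt_or_ge (x:ℕ) (y:ℕ) with hlt | hge
    · refine ⟨(x, y), ?_, rfl⟩
      simp only [Finset.mem_filter, Finset.mem_univ, Finset.mem_product, true_and]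
      exact ⟨hx, hlt⟩
    · refine ⟨(y, x), ?_, Finset.pair_comm y x⟩
      simp only [Finset.mem_filter, Finset.mem_univ, Finset.mem_product, true_and]
      exact ⟨hy, by omega⟩

lemma card_fam3 (hn : 4 ≤ n) : (fam3 hn).card = (n - 1).choose 3 := by
  rw [fam3, Finset.card_image_of_injective _ (fun x y h => Prod.ext_iff.mpr
    ⟨congrArg (fun t : Quad n => t.2.1) h, Prod.ext_iff.mpr
      ⟨congrArg (fun t : Quad n => t.2.2.1) h, congrArg (fun t : Quad n => t.2.2.2) h⟩⟩)]
  rw [show (n - 1).choose 3 = (((Finset.univ : Finset (Fin n)).filter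
      fun i : Fin n => 1 ≤ (i:ℕ)).powersetCard 3).card by
    rw [Finset.card_powersetCard, card_filter_ge]]
  apply Finset.card_bij (fun (t : Fin n × Fin n × Fin n) _ => ({t.1, t.2.2, t.2.1} : Finset (Fin n)))
  · intro t ht
    simp only [Finset.mem_filter, Finset.mem_univ, Finset.mem_product, true_and] at ht
    rw [Finset.mem_powersetCard]
    constructor
    · intro x hx
      simp only [Finset.mem_insert, Finset.mem_singleton] at hx
      rcases hx with rfl | rfl | rfl <;>
        simp only [Finset.mem_filter, Finset.mem_univ, true_and] <;> omega
    · rw [Finset.card_insert_of_notMem (by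
          simp only [Finset.mem_insert, Finset.mem_singleton]
          push_neg
          constructor <;> intro hc <;> (have := congrArg Fin.val hc; omega)),
        Finset.card_pair (by intro hc; have := congrArg Fin.val hc; omega)]
  · intro t ht t' ht'
    simp only [Finset.mem_filter, Finset.mem_univ, Finset.mem_product, true_and] at ht ht'
    intro h
    have m1 : t.1 = t'.1 ∨ t.1 = t'.2.2 ∨ t.1 = t'.2.1 := by
      have : t.1 ∈ ({t'.1, t'.2.2, t'.2.1} : Finset (Fin n)) := h ▸ (by simp)
      simpa using this
    have m2 : t.2.2 = t'.1 ∨ t.2.2 = t'.2.2 ∨ t.2.2 = t'.2.1 := by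
      have : t.2.2 ∈ ({t'.1, t'.2.2, t'.2.1} : Finset (Fin n)) := h ▸ (by simp)
      simpa using this
    have m3 : t.2.1 = t'.1 ∨ t.2.1 = t'.2.2 ∨ t.2.1 = t'.2.1 := by
      have : t.2.1 ∈ ({t'.1, t'.2.2, t'.2.1} : Finset (Fin n)) := h ▸ (by simp)
      simpa using this
    rcases m1 with e1 | e1 | e1 <;> rcases m2 with e2 | e2 | e2 <;> rcases m3 with e3 | e3 | e3 <;>
      first
        | exact Prod.ext_iff.mpr ⟨e1, Prod.ext_iff.mpr ⟨e3, e2⟩⟩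
        | (exfalso; have v1 := congrArg Fin.val e1; have v2 := congrArg Fin.val e2;
            have v3 := congrArg Fin.val e3; omega)
  · intro T hT
    rw [Finset.mem_powersetCard] at hT
    obtain ⟨hsub, hcard⟩ := hT
    set f := T.orderEmbOfFin hcard with hf
    have hmem : ∀ i : Fin 3, f i ∈ T := fun i => T.orderEmbOfFin_mem hcard i
    have hmono := (T.orderEmbOfFin hcard).strictMono
    have h01 : f 0 < f 1 := hmono (by decide)
    have h12 : f 1 < f 2 := hmono (by decide)
    refine ⟨(f 0, f 2, f 1), ?_, ?_⟩
    · simp only [Finset.mem_filter, Finset.mem_univ, Finset.mem_product, true_and]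
      refine ⟨?_, Fin.lt_def.mp h01, Fin.lt_def.mp h12⟩
      have := hsub (hmem 0)
      simp only [Finset.mem_filter, Finset.mem_univ, true_and] at this
      exact this
    · apply Finset.coe_injective
      rw [Finset.coe_insert, Finset.coe_insert, Finset.coe_singleton,
        ← Finset.range_orderEmbOfFin T hcard]
      ext y
      simp only [Set.mem_insert_iff, Set.mem_singleton_iff, Set.mem_range]
      constructor
      · rintro (rfl | rfl | rfl)
        exacts [⟨0, rfl⟩, ⟨1, rfl⟩, ⟨2, rfl⟩]
      · rintro ⟨x, rfl⟩
        fin_cases x <;> tauto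

lemma card_famAll (hn : 4 ≤ n) :
    (famAll hn).card = (n - 3) + (n - 2).choose 2 + (n - 1).choose 3 := by
  have d12 : Disjoint (fam1 hn) (fam2 hn) := by
    rw [Finset.disjoint_left]
    intro q h1 h2
    simp only [fam1, fam2, Finset.mem_image, Finset.mem_filter, Finset.mem_univ,
      Finset.mem_product, true_and] at h1 h2
    obtain ⟨k, _, rfl⟩ := h1
    obtain ⟨p, _, hp⟩ := h2
    have := congrArg (fun t : Quad n => (t.2.2.1 : ℕ)) hp
    simp at this
  have d123 : Disjoint (fam1 hn ∪ fam2 hn) (fam3 hn) := by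
    rw [Finset.disjoint_left]
    intro q h1 h2
    simp only [fam1, fam2, fam3, Finset.mem_union, Finset.mem_image, Finset.mem_filter,
      Finset.mem_univ, Finset.mem_product, true_and] at h1 h2
    obtain ⟨t, ⟨ht1, ht2, ht3⟩, rfl⟩ := h2
    rcases h1 with ⟨k, _, hp⟩ | ⟨p, ⟨hp1, hp2⟩, hp⟩ <;>
    · have h3 := congrArg (fun u : Quad n => (u.2.2.1 : ℕ)) hp
      have h4 := congrArg (fun u : Quad n => (u.2.1 : ℕ)) hp
      have h5 := congrArg (fun u : Quad n => (u.2.2.2 : ℕ)) hp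
      simp only at h3 h4 h5
      omega
  rw [famAll, Finset.card_union_of_disjoint d123, Finset.card_union_of_disjoint d12,
    card_fam1 hn, card_fam2 hn, card_fam3 hn]

end Count


/-- For every `n ≥ 4`, the group `Γ_n^4` is generated by the set `Λ`; hence `Γ_n^4` is
generated by `N_n = C(n,3) - 1` elements. -/
theorem gamma_generated_by_Lambda (n : ℕ) (hn : 4 ≤ n) :
    Subgroup.closure (LambdaGamma n) = ⊤ ∧
    (LambdaGamma n).ncard = n.choose 3 - 1 := by
  classical
  refine ⟨closure_lambda_top, ?_⟩
  rw [lambda_eq hn, Set.ncard_coe_finset, Finset.card_image_of_injOn (gg_injOn hn),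
    card_famAll hn]
  obtain ⟨m, rfl⟩ : ∃ m, n = m + 4 := ⟨n - 4, by omega⟩
  have e1 : m + 4 - 3 = m + 1 := by omega
  have e2 : m + 4 - 2 = m + 2 := by omega
  have e3 : m + 4 - 1 = m + 3 := by omega
  rw [e1, e2, e3]
  have p1 : (m + 4).choose 3 = (m + 3).choose 2 + (m + 3).choose 3 :=
    Nat.choose_succ_succ (m + 3) 2
  have p2 : (m + 3).choose 2 = (m + 2).choose 1 + (m + 2).choose 2 :=
    Nat.choose_succ_succ (m + 2) 1
  have p3 : (m + 2).choose 1 = m + 2 := Nat.choose_one_right _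
  omega
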